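/- Assume e > -p/2 - n/2 - 1, -p/2 - 1 < a < n/2 + e, and -(n/2+e-a)/(p/2+n/2+e+1) < b < min(n/2+e-a-1, 0). Then for all w > 0, 0 ≤ φ(w) ≤ (p/2+a+1) / (n/2+e-a + b(p/2+n/2+e+1)). -/

import Mathlib

open Real Filter MeasureTheory

/-- The Gauss hypergeometric function `F(α, β; γ; z)`, defined by its power series. -/
noncomputable def hypF (α β γ z : ℝ) : ℝ :=
  ∑' i : ℕ, ((ascPochhammer ℝ i).eval α * (ascPochhammer ℝ i).eval β /
      (ascPochhammer ℝ i).eval γ) * z ^ i / (Nat.factorial i)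

/-!
Put `c = p/2 + a`, `s = p/2 + n/2 + e + 1` and `A_α = ∫₀¹ λ^c (1-λ)^b (1+wλ)^(-α)`. Since
`wλ (1+wλ)^(-s-1) = (1+wλ)^(-s) - (1+wλ)^(-s-1)`, the upper bound on `φ(w)` amounts to
`((1+b)s - (c+1)) A_s ≤ (1+b) s A_(s+1)`.

Writing `1 + wλ = (1+w)(1 - v(1-λ))` with `v = w/(1+w) < 1` and expanding by the binomial series,
`(1+w)^α A_α = ∑ᵢ multichoose α i · vⁱ · B(c+1, b+i+1)`. The Beta recurrence and `b ≤ 0` show that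
the `i`-th term of `(1+b) s v (1+w)^(s+1) A_(s+1)` is at most the `(i+1)`-st term of
`(1+b) s (1+w)^(s+1) A_(s+1) - ((1+b)s - (c+1)) (1+w)^s A_s`, whose `0`-th term is
`(c+1) B(c+1, b+1) ≥ 0`. Summing, and using `v (1+w) = w`, gives the inequality.
-/

open Set intervalIntegral
open scoped Interval

lemma Real.multichoose_eq_ascPochhammer_eval_div (a : ℝ) (n : ℕ) :
    Ring.multichoose a n = (ascPochhammer ℝ n).eval a / n.factorial := by
  rw [eq_div_iff (by positivity), mul_comm, ← nsmul_eq_mul,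
    Ring.factorial_nsmul_multichoose_eq_ascPochhammer, Polynomial.ascPochhammer_smeval_eq_eval]

lemma Real.multichoose_pos {a : ℝ} (ha : 0 < a) (n : ℕ) : 0 < Ring.multichoose a n := by
  rw [Real.multichoose_eq_ascPochhammer_eval_div]
  exact div_pos (ascPochhammer_pos n a ha) (by positivity)

lemma Real.succ_mul_multichoose_succ (a : ℝ) (n : ℕ) :
    (n + 1) * Ring.multichoose a (n + 1) = (a + n) * Ring.multichoose a n := by
  simp only [Real.multichoose_eq_ascPochhammer_eval_div, ascPochhammer_succ_eval,
    Nat.factorial_succ]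
  push_cast
  field_simp

lemma Real.succ_mul_multichoose_succ_eq_mul_multichoose_add_one (a : ℝ) (n : ℕ) :
    (n + 1) * Ring.multichoose a (n + 1) = a * Ring.multichoose (a + 1) n := by
  simp only [Real.multichoose_eq_ascPochhammer_eval_div, ascPochhammer_succ_left,
    Nat.factorial_succ, Polynomial.eval_mul, Polynomial.eval_X, Polynomial.eval_comp,
    Polynomial.eval_add, Polynomial.eval_one]
  push_cast
  field_simp

lemma Real.hasSum_multichoose_mul_pow (a : ℝ) {x : ℝ} (hx : |x| < 1) :
    HasSum (fun n ↦ Ring.multichoose a n * x ^ n) ((1 - x) ^ (-a)) := by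
  have h := (Real.one_div_one_sub_rpow_hasFPowerSeriesOnBall_zero a).hasSum
    (y := x) (by simpa [enorm_eq_nnnorm, ← NNReal.coe_lt_coe] using hx)
  rw [rpow_neg (by linarith [le_abs_self x]), ← one_div]
  simpa [FormalMultilinearSeries.ofScalars_apply_eq, ← Ring.multichoose_eq, mul_comm] using h

lemma intervalIntegrable_rpow_mul_one_sub_rpow {c β : ℝ} (hc : -1 < c) (hβ : -1 < β) :
    IntervalIntegrable (fun l : ℝ ↦ l ^ c * (1 - l) ^ β) volume 0 1 := by
  refine IntervalIntegrable.trans (b := 1 / 2) ?_ ?_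
  · refine (intervalIntegrable_rpow' hc).mul_continuousOn
      (ContinuousOn.rpow_const (by fun_prop) fun l hl ↦ Or.inl ?_)
    rw [uIcc_of_le (by norm_num)] at hl
    linarith [hl.2]
  · have h := (intervalIntegrable_rpow' (a := 0) (b := 1 / 2) hβ).comp_sub_left 1
    norm_num at h
    refine h.symm.continuousOn_mul (ContinuousOn.rpow_const (by fun_prop) fun l hl ↦ Or.inl ?_)
    rw [uIcc_of_le (by norm_num)] at hl
    linarith [hl.1]

lemma intervalIntegrable_rpow_mul_one_sub_rpow_mul {c β r w : ℝ} (hc : -1 < c) (hβ : -1 < β)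
    (hw : 0 ≤ w) :
    IntervalIntegrable (fun l : ℝ ↦ l ^ c * (1 - l) ^ β * (1 + w * l) ^ r) volume 0 1 := by
  refine (intervalIntegrable_rpow_mul_one_sub_rpow hc hβ).mul_continuousOn
    (ContinuousOn.rpow_const (by fun_prop) fun l hl ↦ Or.inl ?_)
  rw [uIcc_of_le zero_le_one] at hl
  nlinarith [hl.1]

lemma mul_integral_rpow_mul_one_sub_rpow_sub_one {c y : ℝ} (hc : -1 < c) (hy : 0 < y) :
    y * ∫ l in (0:ℝ)..1, l ^ c * (1 - l) ^ (y - 1) =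
      (c + 1 + y) * ∫ l in (0:ℝ)..1, l ^ c * (1 - l) ^ y := by
  have hderiv : ∀ l ∈ Ioo (0:ℝ) 1, HasDerivAt (fun l ↦ l ^ (c + 1) * (1 - l) ^ y)
      ((c + 1 + y) * (l ^ c * (1 - l) ^ y) - y * (l ^ c * (1 - l) ^ (y - 1))) l := by
    intro l ⟨hl0, hl1⟩
    have hl1 : 0 < 1 - l := sub_pos.2 hl1
    have hy' : (1 - l) ^ y = (1 - l) ^ (y - 1) * (1 - l) := by
      rw [← rpow_add_one hl1.ne', sub_add_cancel]
    refine ((hasDerivAt_rpow_const (p := c + 1) (Or.inl hl0.ne')).mul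
      (((hasDerivAt_id l).const_sub 1).rpow_const (p := y) (Or.inl hl1.ne'))).congr_deriv ?_
    simp only [id, add_sub_cancel_right, rpow_add_one hl0.ne', hy']
    ring
  have hy₀ := (intervalIntegrable_rpow_mul_one_sub_rpow hc (by linarith : -1 < y)).const_mul
    (c + 1 + y)
  have hy₁ := (intervalIntegrable_rpow_mul_one_sub_rpow hc (by linarith : -1 < y - 1)).const_mul y
  have hFTC := integral_eq_sub_of_hasDerivAt_of_le zero_le_one
    (by fun_prop (disch := first | positivity | linarith)) hderiv (hy₀.sub hy₁)
  rw [integral_sub hy₀ hy₁, intervalIntegral.integral_const_mul,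
    intervalIntegral.integral_const_mul] at hFTC
  simp only [sub_self, zero_rpow hy.ne', zero_rpow (by linarith : c + 1 ≠ 0), zero_mul,
    sub_zero] at hFTC
  linarith

lemma hasSum_rpow_mul_one_sub_rpow_mul_one_add_mul_rpow_neg {c b α w l : ℝ} (hw : 0 ≤ w)
    (hl : l ∈ Ioo (0:ℝ) 1) :
    HasSum (fun i : ℕ ↦ Ring.multichoose α i * (w / (1 + w)) ^ i * (l ^ c * (1 - l) ^ (b + i)))
      ((1 + w) ^ α * (l ^ c * (1 - l) ^ b * (1 + w * l) ^ (-α))) := by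
  obtain ⟨hl0, hl1⟩ := hl
  have h1w : 0 < 1 + w := by linarith
  set v := w / (1 + w)
  have hx : |v * (1 - l)| < 1 := by
    rw [abs_of_nonneg (by positivity), div_mul_eq_mul_div, div_lt_one h1w]
    nlinarith
  have hsplit : 1 + w * l = (1 + w) * (1 - v * (1 - l)) := by
    simp only [v]
    field_simp
    ring
  have hsum : (1 + w) ^ α * (1 + w * l) ^ (-α) = (1 - v * (1 - l)) ^ (-α) := by
    rw [hsplit, mul_rpow h1w.le (by nlinarith [abs_lt.1 hx]), ← mul_assoc, ← rpow_add h1w,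
      add_neg_cancel, rpow_zero, one_mul]
  have h := (Real.hasSum_multichoose_mul_pow α hx).mul_left (l ^ c * (1 - l) ^ b)
  rw [← hsum, mul_left_comm] at h
  refine h.congr_fun fun i ↦ ?_
  rw [rpow_add (by linarith), rpow_natCast, mul_pow]
  ring

lemma hasSum_integral_one_add_mul_rpow_neg {c b α w : ℝ} (hc : -1 < c) (hb : -1 < b)
    (hα : 0 < α) (hw : 0 ≤ w) :
    HasSum (fun i : ℕ ↦ Ring.multichoose α i * (w / (1 + w)) ^ i *
        ∫ l in (0:ℝ)..1, l ^ c * (1 - l) ^ (b + i))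
      ((1 + w) ^ α * ∫ l in (0:ℝ)..1, l ^ c * (1 - l) ^ b * (1 + w * l) ^ (-α)) := by
  have hae {P : ℝ → Prop} (h : ∀ l ∈ Ioo (0:ℝ) 1, P l) : ∀ᵐ l, l ∈ Ι (0:ℝ) 1 → P l := by
    filter_upwards [volume.ae_ne 1] with l hl1 hl
    rw [uIoc_of_le zero_le_one] at hl
    exact h l ⟨hl.1, hl.2.lt_of_ne hl1⟩
  set F : ℕ → ℝ → ℝ :=
    fun i l ↦ Ring.multichoose α i * (w / (1 + w)) ^ i * (l ^ c * (1 - l) ^ (b + i))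
  have hF : ∀ i l, l ∈ Ι (0:ℝ) 1 → 0 ≤ F i l := by
    intro i l hl
    rw [uIoc_of_le zero_le_one] at hl
    have := hl.1.le
    have : 0 ≤ 1 - l := by linarith [hl.2]
    have := (Real.multichoose_pos hα i).le
    positivity
  simp only [← intervalIntegral.integral_const_mul]
  refine hasSum_integral_of_dominated_convergence F (fun i ↦ ?_)
    (fun i ↦ ae_of_all _ fun l hl ↦ (Real.norm_of_nonneg (hF i l hl)).le)
    (hae fun l hl ↦ (hasSum_rpow_mul_one_sub_rpow_mul_one_add_mul_rpow_neg hw hl).summable) ?_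
    (hae fun l hl ↦ hasSum_rpow_mul_one_sub_rpow_mul_one_add_mul_rpow_neg hw hl)
  · exact (by fun_prop : Measurable (F i)).aestronglyMeasurable
  · refine ((intervalIntegrable_rpow_mul_one_sub_rpow_mul (r := -α) hc hb hw).const_mul
      ((1 + w) ^ α)).congr_uIoo fun l hl ↦ ?_
    rw [uIoo_of_le zero_le_one] at hl
    exact (hasSum_rpow_mul_one_sub_rpow_mul_one_add_mul_rpow_neg hw hl).tsum_eq.symm

lemma hasSum_le_of_le_succ {X Y : ℕ → ℝ} {x y : ℝ} (hY : HasSum Y y) (hX : HasSum X x)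
    (h₀ : 0 ≤ X 0) (h : ∀ i, Y i ≤ X (i + 1)) : y ≤ x := by
  have hX' := (hasSum_nat_add_iff' 1).mpr hX
  rw [Finset.sum_range_one] at hX'
  linarith [hasSum_le h hY hX']

lemma multichoose_mul_integral_le {c b s : ℝ} (hc : -1 < c) (hb : -1 < b) (hb₀ : b ≤ 0)
    (hs : 0 < s) (i : ℕ) :
    (1 + b) * s * (Ring.multichoose (s + 1) i * ∫ l in (0:ℝ)..1, l ^ c * (1 - l) ^ (b + i)) ≤
      ((1 + b) * s * Ring.multichoose (s + 1) (i + 1) -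
          ((1 + b) * s - (c + 1)) * Ring.multichoose s (i + 1)) *
        ∫ l in (0:ℝ)..1, l ^ c * (1 - l) ^ (b + ↑(i + 1)) := by
  have hi : (0:ℝ) ≤ i := i.cast_nonneg
  have hbi : 0 < b + i + 1 := by linarith
  have hβ : (b + i + 1) * (∫ l in (0:ℝ)..1, l ^ c * (1 - l) ^ (b + i)) =
      (c + 1 + (b + i + 1)) * ∫ l in (0:ℝ)..1, l ^ c * (1 - l) ^ (b + ↑(i + 1)) := by
    have h := mul_integral_rpow_mul_one_sub_rpow_sub_one hc hbi
    rw [add_sub_cancel_right] at h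
    simpa only [Nat.cast_succ, add_assoc] using h
  set β := ∫ l in (0:ℝ)..1, l ^ c * (1 - l) ^ (b + i)
  set β' := ∫ l in (0:ℝ)..1, l ^ c * (1 - l) ^ (b + ↑(i + 1))
  set M := Ring.multichoose (s + 1) i
  have hM := Real.succ_mul_multichoose_succ (s + 1) i
  have hN := Real.succ_mul_multichoose_succ_eq_mul_multichoose_add_one s i
  have hβ'₀ : 0 ≤ β' :=
    integral_nonneg zero_le_one fun l hl ↦ by have := hl.1; have := hl.2; positivity
  have hgap : 0 ≤ s * M * β' * (c + 1) * (-b) * i := by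
    have := (Real.multichoose_pos (by linarith : 0 < s + 1) i).le
    have : 0 ≤ c + 1 := by linarith
    have : 0 ≤ -b := by linarith
    positivity
  refine le_of_mul_le_mul_right (a := (i + 1) * (b + i + 1)) ?_ (by positivity)
  have key : ((1 + b) * s * Ring.multichoose (s + 1) (i + 1) -
          ((1 + b) * s - (c + 1)) * Ring.multichoose s (i + 1)) * β' * ((i + 1) * (b + i + 1)) -
      (1 + b) * s * (M * β) * ((i + 1) * (b + i + 1)) = s * M * β' * (c + 1) * (-b) * i := by
    linear_combination (1 + b) * s * β' * (b + i + 1) * hM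
      - ((1 + b) * s - (c + 1)) * β' * (b + i + 1) * hN - (1 + b) * s * M * (i + 1) * hβ
  linarith

lemma sub_mul_integral_le_mul_integral {c b s w : ℝ} (hc : -1 < c) (hb : -1 < b) (hb₀ : b ≤ 0)
    (hs : 0 < s) (hw : 0 ≤ w) :
    ((1 + b) * s - (c + 1)) * ∫ l in (0:ℝ)..1, l ^ c * (1 - l) ^ b * (1 + w * l) ^ (-s) ≤
      (1 + b) * s * ∫ l in (0:ℝ)..1, l ^ c * (1 - l) ^ b * (1 + w * l) ^ (-(s + 1)) := by
  have h1w : 0 < 1 + w := by linarith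
  set v := w / (1 + w)
  have hB := hasSum_integral_one_add_mul_rpow_neg hc hb hs hw
  have hA := hasSum_integral_one_add_mul_rpow_neg hc hb (by linarith : 0 < s + 1) hw
  have key := hasSum_le_of_le_succ (hA.mul_left ((1 + b) * s * v))
    ((hA.mul_left ((1 + b) * s)).sub (hB.mul_left ((1 + b) * s - (c + 1)))) ?_ fun i ↦ ?_
  · rw [rpow_add_one h1w.ne'] at key
    have hvw : v * (1 + w) = w := div_mul_cancel₀ w h1w.ne'
    refine le_of_mul_le_mul_left ?_ (rpow_pos_of_pos h1w s)
    linear_combination key - (1 + b) * s * (1 + w) ^ s *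
      (∫ l in (0:ℝ)..1, l ^ c * (1 - l) ^ b * (1 + w * l) ^ (-(s + 1))) * hvw
  · have : 0 ≤ ∫ l in (0:ℝ)..1, l ^ c * (1 - l) ^ b :=
      integral_nonneg zero_le_one fun l hl ↦ by have := hl.1; have := hl.2; positivity
    simp only [Ring.multichoose_zero_right, pow_zero, CharP.cast_eq_zero, add_zero, one_mul]
    nlinarith
  · have hv₀ : 0 ≤ v := by positivity
    calc (1 + b) * s * v * (Ring.multichoose (s + 1) i * v ^ i *
            ∫ l in (0:ℝ)..1, l ^ c * (1 - l) ^ (b + i))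
        = v ^ (i + 1) * ((1 + b) * s * (Ring.multichoose (s + 1) i *
            ∫ l in (0:ℝ)..1, l ^ c * (1 - l) ^ (b + i))) := by ring
      _ ≤ v ^ (i + 1) * (((1 + b) * s * Ring.multichoose (s + 1) (i + 1) -
          ((1 + b) * s - (c + 1)) * Ring.multichoose s (i + 1)) *
            ∫ l in (0:ℝ)..1, l ^ c * (1 - l) ^ (b + ↑(i + 1))) :=
        mul_le_mul_of_nonneg_left (multichoose_mul_integral_le hc hb hb₀ hs i) (by positivity)
      _ = _ := by ring

lemma mul_integral_div_integral_le {c b s w : ℝ} (hc : -1 < c) (hb : -1 < b) (hb₀ : b ≤ 0)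
    (hw : 0 ≤ w) (hD : 0 < (1 + b) * s - (c + 1)) :
    w * (∫ l in (0:ℝ)..1, l ^ (c + 1) * (1 - l) ^ b * (1 + w * l) ^ (-(s + 1))) /
        (∫ l in (0:ℝ)..1, l ^ c * (1 - l) ^ b * (1 + w * l) ^ (-(s + 1))) ≤
      (c + 1) / ((1 + b) * s - (c + 1)) := by
  have hs : 0 < s := by nlinarith
  have hA : 0 < ∫ l in (0:ℝ)..1, l ^ c * (1 - l) ^ b * (1 + w * l) ^ (-(s + 1)) :=
    intervalIntegral_pos_of_pos_on (intervalIntegrable_rpow_mul_one_sub_rpow_mul hc hb hw)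
      (fun l ⟨hl₀, hl₁⟩ ↦ by
        have : 0 < 1 - l := by linarith
        have : 0 < 1 + w * l := by nlinarith
        positivity) zero_lt_one
  have hsplit : w * (∫ l in (0:ℝ)..1, l ^ (c + 1) * (1 - l) ^ b * (1 + w * l) ^ (-(s + 1))) =
      (∫ l in (0:ℝ)..1, l ^ c * (1 - l) ^ b * (1 + w * l) ^ (-s)) -
        ∫ l in (0:ℝ)..1, l ^ c * (1 - l) ^ b * (1 + w * l) ^ (-(s + 1)) := by
    rw [← intervalIntegral.integral_const_mul,
      ← integral_sub (intervalIntegrable_rpow_mul_one_sub_rpow_mul hc hb hw)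
        (intervalIntegrable_rpow_mul_one_sub_rpow_mul hc hb hw)]
    refine integral_congr_uIoo fun l hl ↦ ?_
    rw [uIoo_of_le zero_le_one] at hl
    have hwl : 0 < 1 + w * l := by nlinarith [hl.1]
    rw [rpow_add_one hl.1.ne', show -s = -(s + 1) + 1 by ring, rpow_add_one hwl.ne']
    ring
  rw [div_le_div_iff₀ hA hD, hsplit]
  linear_combination sub_mul_integral_le_mul_integral hc hb hb₀ hs hw

theorem stmt_13_general (p n : ℕ) (a b e : ℝ)
    (ha1 : -(p:ℝ)/2 - 1 < a) (ha2 : a < (n:ℝ)/2 + e)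
    (hb1 : -(((n:ℝ)/2 + e - a) / ((p:ℝ)/2 + (n:ℝ)/2 + e + 1)) < b)
    (hb2 : b < min ((n:ℝ)/2 + e - a - 1) 0) (φ : ℝ → ℝ)
    (hφ : ∀ w > (0:ℝ), φ w =
      w * (∫ l in (0:ℝ)..1, l ^ ((p:ℝ)/2 + a + 1) * (1 - l) ^ b *
            (1 + w * l) ^ (-((p:ℝ)/2 + (n:ℝ)/2 + e + 2))) /
          (∫ l in (0:ℝ)..1, l ^ ((p:ℝ)/2 + a) * (1 - l) ^ b *
            (1 + w * l) ^ (-((p:ℝ)/2 + (n:ℝ)/2 + e + 2)))) :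
    ∀ w > (0:ℝ), 0 ≤ φ w ∧
      φ w ≤ ((p:ℝ)/2 + a + 1) / ((n:ℝ)/2 + e - a + b * ((p:ℝ)/2 + (n:ℝ)/2 + e + 1)) := by
  intro w hw
  set c := (p:ℝ)/2 + a with hc_def
  set s := (p:ℝ)/2 + (n:ℝ)/2 + e + 1 with hs_def
  have hc : -1 < c := by linarith
  have hcs : c + 1 < s := by linarith
  have hbs : -b * s < (n:ℝ)/2 + e - a := (lt_div_iff₀ (by linarith)).1 (neg_lt.1 hb1)
  have hD : (n:ℝ)/2 + e - a + b * s = (1 + b) * s - (c + 1) := by ring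
  have hb : -1 < b := by nlinarith
  rw [hφ w hw, show -((p:ℝ)/2 + (n:ℝ)/2 + e + 2) = -(s + 1) by ring, hD]
  refine ⟨div_nonneg (mul_nonneg hw.le ?_) ?_,
    mul_integral_div_integral_le hc hb (lt_min_iff.1 hb2).2.le hw.le (by linarith)⟩ <;>
  exact integral_nonneg zero_le_one fun l ⟨hl₀, hl₁⟩ ↦ by
    have : 0 ≤ 1 - l := by linarith
    have : 0 < 1 + w * l := by nlinarith
    positivity

theorem stmt_13 (p n : ℕ) (hp : 3 ≤ p) (hn : 1 ≤ n) (a b e : ℝ)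
    (he : -(p:ℝ)/2 - (n:ℝ)/2 - 1 < e) (ha1 : -(p:ℝ)/2 - 1 < a) (ha2 : a < (n:ℝ)/2 + e)
    (hb1 : -(((n:ℝ)/2 + e - a) / ((p:ℝ)/2 + (n:ℝ)/2 + e + 1)) < b)
    (hb2 : b < min ((n:ℝ)/2 + e - a - 1) 0) (φ : ℝ → ℝ)
    (hφ : ∀ w > (0:ℝ), φ w =
      w * (∫ l in (0:ℝ)..1, l ^ ((p:ℝ)/2 + a + 1) * (1 - l) ^ b *
            (1 + w * l) ^ (-((p:ℝ)/2 + (n:ℝ)/2 + e + 2))) /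
          (∫ l in (0:ℝ)..1, l ^ ((p:ℝ)/2 + a) * (1 - l) ^ b *
            (1 + w * l) ^ (-((p:ℝ)/2 + (n:ℝ)/2 + e + 2)))) :
    ∀ w > (0:ℝ), 0 ≤ φ w ∧
      φ w ≤ ((p:ℝ)/2 + a + 1) / ((n:ℝ)/2 + e - a + b * ((p:ℝ)/2 + (n:ℝ)/2 + e + 1)) :=
  stmt_13_general p n a b e ha1 ha2 hb1 hb2 φ hφ
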